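/- arXiv:1903.10874 — 2 statements merged into one kernel-verified Lean document; each statement's English description precedes it below -/
import Mathlib

section
/- Let q be a squarefree bivariate polynomial of degree k ≤ n, and let X_d be a set of exactly d = d(n,k) points on the zero set of q. Then X_d is n-independent if and only if every p ∈ Π_n vanishing on X_d factors as p = q·r with r ∈ Π_{n−k}. -/
open MvPolynomial
open scoped Classical

/-- Evaluation of a bivariate polynomial at a point of the plane. -/
noncomputable def evalPt (p : MvPolynomial (Fin 2) ℝ) (A : ℝ × ℝ) : ℝ :=
  MvPolynomial.eval ![A.1, A.2] p

/-- `p` is an `n`-fundamental polynomial of the node `A` with respect to the node set `X`. -/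
def IsFund (n : ℕ) (X : Finset (ℝ × ℝ)) (A : ℝ × ℝ)
    (p : MvPolynomial (Fin 2) ℝ) : Prop :=
  p.totalDegree ≤ n ∧ evalPt p A = 1 ∧ ∀ B ∈ X, B ≠ A → evalPt p B = 0

/-- The node set `X` is `n`-independent. -/
def Indep (n : ℕ) (X : Finset (ℝ × ℝ)) : Prop :=
  ∀ A ∈ X, ∃ p, IsFund n X A p

/-- `d(n,k) = N_n - N_{n-k} = k(2n+3-k)/2`. -/
def dd (n k : ℕ) : ℕ := k * (2 * n + 3 - k) / 2

/-- The node set `X` is `n`-poised. -/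
def Poised (n : ℕ) (X : Finset (ℝ × ℝ)) : Prop :=
  X.card = (n + 1) * (n + 2) / 2 ∧
  ∀ p : MvPolynomial (Fin 2) ℝ, p.totalDegree ≤ n →
    (∀ A ∈ X, evalPt p A = 0) → p = 0

/-- The space of polynomials of total degree at most `n` vanishing on `X`. -/
noncomputable def vanishSp (n : ℕ) (X : Finset (ℝ × ℝ)) :
    Submodule ℝ (MvPolynomial (Fin 2) ℝ) :=
  MvPolynomial.restrictTotalDegree (Fin 2) ℝ n ⊓
    ⨅ A ∈ X, LinearMap.ker ((MvPolynomial.aeval (R := ℝ) ![A.1, A.2]).toLinearMap)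

/-!
Multiplication by `q ≠ 0` embeds `Π_{n-k}` into the space `V` of polynomials of `Π_n` vanishing
on `X`, so `dim V ≥ N_{n-k}`, with equality exactly when every such polynomial is a multiple
`q * r` with `r ∈ Π_{n-k}`. On the other hand `X` is `n`-independent iff evaluation
`Π_n → ℝ^X` is surjective, i.e., by rank–nullity, iff `dim V = N_n - #X = N_n - d(n,k) = N_{n-k}`.
-/

section Dimension

open Finset

variable {σ R : Type*} [Fintype σ] [DecidableEq σ] [CommRing R] [Nontrivial R]

theorem finrank_restrictTotalDegree (m : ℕ) :
    Module.finrank R (restrictTotalDegree σ R m)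
      = ∑ s ∈ range (m + 1), (Fintype.card σ + s - 1).choose s := by
  have hmonomials : {d : σ →₀ ℕ | (d.sum fun _ e => e) ≤ m}
      = ↑((range (m + 1)).biUnion fun s => (univ : Finset σ).finsuppAntidiag s) := by
    ext d
    simp only [Set.mem_ofPred_eq, coe_biUnion, coe_range, Set.mem_Iio, Set.mem_iUnion, mem_coe,
      mem_finsuppAntidiag', subset_univ, and_true, exists_prop, exists_eq_right']
    omega
  rw [restrictTotalDegree, Module.finrank_eq_nat_card_basis (basisRestrictSupport R _), hmonomials,
    Nat.card_coe_set_eq, Set.ncard_coe_finset, card_biUnion]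
  · simp [card_finsuppAntidiag_nat_eq_choose]
  · intro s _ t _ hst
    exact disjoint_left.2 fun d hs ht => hst <| by
      rw [mem_finsuppAntidiag] at hs ht
      rw [← hs.1, ← ht.1]

theorem finrank_restrictTotalDegree_fin_two (m : ℕ) :
    Module.finrank R (restrictTotalDegree (Fin 2) R m) = (m + 1) * (m + 2) / 2 := by
  have hlines : ∀ s, (Fintype.card (Fin 2) + s - 1).choose s = s + 1 := fun s => by
    rw [Fintype.card_fin, show 2 + s - 1 = s + 1 by omega, Nat.choose_succ_self_right]
  have hgauss := sum_range_succ' (fun i => i) (m + 1)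
  rw [add_zero] at hgauss
  rw [finrank_restrictTotalDegree, sum_congr rfl fun s _ => hlines s, ← hgauss, sum_range_id,
    Nat.add_sub_cancel, mul_comm]

end Dimension

theorem finrank_map_mulLeft {R A : Type*} [CommRing R] [Ring A] [NoZeroDivisors A] [Algebra R A]
    {q : A} (hq : q ≠ 0) (S : Submodule R A) :
    Module.finrank R (S.map (LinearMap.mulLeft R q)) = Module.finrank R S :=
  (Submodule.equivMapOfInjective _ (fun _ _ h => mul_left_cancel₀ hq h) S).finrank_eq.symm

theorem aeval_eq_evalPt (p : MvPolynomial (Fin 2) ℝ) (A : ℝ × ℝ) :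
    aeval ![A.1, A.2] p = evalPt p A :=
  rfl

theorem mem_vanishSp {n : ℕ} {X : Finset (ℝ × ℝ)} {p : MvPolynomial (Fin 2) ℝ} :
    p ∈ vanishSp n X ↔ p.totalDegree ≤ n ∧ ∀ A ∈ X, evalPt p A = 0 := by
  simp [vanishSp, Submodule.mem_iInf, mem_restrictTotalDegree, aeval_eq_evalPt]

instance (n : ℕ) (X : Finset (ℝ × ℝ)) : FiniteDimensional ℝ (vanishSp n X) :=
  Submodule.finiteDimensional_of_le inf_le_left

noncomputable def evalOn (n : ℕ) (X : Finset (ℝ × ℝ)) :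
    restrictTotalDegree (Fin 2) ℝ n →ₗ[ℝ] (X → ℝ) :=
  LinearMap.pi fun A => (aeval ![A.1.1, A.1.2]).toLinearMap ∘ₗ (restrictTotalDegree _ _ n).subtype

@[simp]
theorem evalOn_apply (n : ℕ) (X : Finset (ℝ × ℝ)) (p : restrictTotalDegree (Fin 2) ℝ n) (A : X) :
    evalOn n X p A = evalPt (p : MvPolynomial (Fin 2) ℝ) A :=
  rfl

theorem isFund_iff_evalOn_eq_single {n : ℕ} {X : Finset (ℝ × ℝ)} {A : ℝ × ℝ} (hA : A ∈ X)
    (p : restrictTotalDegree (Fin 2) ℝ n) :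
    IsFund n X A p ↔ evalOn n X p = Pi.single ⟨A, hA⟩ 1 := by
  simp only [IsFund, (mem_restrictTotalDegree _ _ _).1 p.2, true_and, funext_iff, evalOn_apply,
    Pi.single_apply, Subtype.forall, Subtype.mk.injEq]
  constructor
  · rintro ⟨hpA, hpB⟩ B hB
    split_ifs with hBA
    · rwa [hBA]
    · exact hpB B hB hBA
  · intro h
    exact ⟨by simpa using h A hA, fun B hB hBA => by simpa [hBA] using h B hB⟩

theorem indep_iff_surjective_evalOn {n : ℕ} {X : Finset (ℝ × ℝ)} :
    Indep n X ↔ Function.Surjective (evalOn n X) := by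
  have hfund : Indep n X ↔ ∀ A : X, Pi.single A 1 ∈ LinearMap.range (evalOn n X) := by
    refine ⟨fun h A => ?_, fun h A hA => ?_⟩
    · obtain ⟨p, hp⟩ := h A A.2
      exact ⟨⟨p, (mem_restrictTotalDegree _ _ _).2 hp.1⟩, (isFund_iff_evalOn_eq_single A.2 _).1 hp⟩
    · obtain ⟨p, hp⟩ := h ⟨A, hA⟩
      exact ⟨p, (isFund_iff_evalOn_eq_single hA p).2 hp⟩
  rw [hfund, ← LinearMap.range_eq_top, eq_top_iff, ← (Pi.basisFun ℝ X).span_eq,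
    Submodule.span_le, Set.range_subset_iff]
  simp

theorem map_ker_evalOn (n : ℕ) (X : Finset (ℝ × ℝ)) :
    (LinearMap.ker (evalOn n X)).map (restrictTotalDegree _ _ n).subtype = vanishSp n X := by
  ext p
  simp [mem_vanishSp, funext_iff, mem_restrictTotalDegree, and_comm]

theorem indep_iff_finrank_vanishSp_add_card {n : ℕ} {X : Finset (ℝ × ℝ)} :
    Indep n X ↔ Module.finrank ℝ (vanishSp n X) + X.card = (n + 1) * (n + 2) / 2 := by
  have hrank := (evalOn n X).finrank_range_add_finrank_ker
  rw [finrank_restrictTotalDegree_fin_two, ← Submodule.finrank_map_subtype_eq,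
    map_ker_evalOn] at hrank
  have hcard : Module.finrank ℝ (X → ℝ) = X.card := by simp
  rw [indep_iff_surjective_evalOn, ← LinearMap.range_eq_top]
  constructor
  · intro h
    rw [h, finrank_top, hcard] at hrank
    omega
  · intro h
    exact Submodule.eq_top_of_finrank_eq (by omega)

theorem add_dd {n k : ℕ} (hk : k ≤ n) :
    (n - k + 1) * (n - k + 2) / 2 + dd n k = (n + 1) * (n + 2) / 2 := by
  obtain ⟨m, rfl⟩ := Nat.exists_eq_add_of_le hk
  have hexpand : (k + m + 1) * (k + m + 2) = (m + 1) * (m + 2) + k * (2 * (k + m) + 3 - k) := by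
    rw [show 2 * (k + m) + 3 - k = k + 2 * m + 3 by omega]
    ring
  have heven : 2 ∣ (m + 1) * (m + 2) := (Nat.even_mul_succ_self (m + 1)).two_dvd
  simp only [dd, Nat.add_sub_cancel_left, hexpand]
  omega

theorem map_mulLeft_le_vanishSp {n k : ℕ} (hk : k ≤ n) {q : MvPolynomial (Fin 2) ℝ}
    (hq : q.totalDegree ≤ k) {X : Finset (ℝ × ℝ)} (hXq : ∀ A ∈ X, evalPt q A = 0) :
    (restrictTotalDegree (Fin 2) ℝ (n - k)).map (LinearMap.mulLeft ℝ q) ≤ vanishSp n X := by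
  rintro _ ⟨r, hr, rfl⟩
  rw [SetLike.mem_coe, mem_restrictTotalDegree] at hr
  refine mem_vanishSp.2 ⟨?_, fun A hA => ?_⟩
  · calc (q * r).totalDegree ≤ q.totalDegree + r.totalDegree := totalDegree_mul q r
      _ ≤ n := by omega
  · rw [LinearMap.mulLeft_apply, evalPt, map_mul, ← evalPt, hXq A hA, zero_mul]

theorem stmt7 (n k : ℕ) (hk : k ≤ n) (q : MvPolynomial (Fin 2) ℝ)
    (hq : q.totalDegree = k) (hsf : Squarefree q)
    (X : Finset (ℝ × ℝ)) (hXq : ∀ A ∈ X, evalPt q A = 0)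
    (hcard : X.card = dd n k) :
    Indep n X ↔
      ∀ p : MvPolynomial (Fin 2) ℝ, p.totalDegree ≤ n →
        (∀ A ∈ X, evalPt p A = 0) →
        ∃ r : MvPolynomial (Fin 2) ℝ, r.totalDegree ≤ n - k ∧ p = q * r := by
  set W := (restrictTotalDegree (Fin 2) ℝ (n - k)).map (LinearMap.mulLeft ℝ q)
  have hWV : W ≤ vanishSp n X := map_mulLeft_le_vanishSp hk hq.le hXq
  have hW : Module.finrank ℝ W = (n - k + 1) * (n - k + 2) / 2 := by
    rw [finrank_map_mulLeft hsf.ne_zero, finrank_restrictTotalDegree_fin_two]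
  have hfactor : (∀ p : MvPolynomial (Fin 2) ℝ, p.totalDegree ≤ n →
      (∀ A ∈ X, evalPt p A = 0) →
      ∃ r : MvPolynomial (Fin 2) ℝ, r.totalDegree ≤ n - k ∧ p = q * r) ↔ vanishSp n X ≤ W := by
    simp [SetLike.le_def, mem_vanishSp, W, mem_restrictTotalDegree, eq_comm]
  rw [indep_iff_finrank_vanishSp_add_card, hcard, ← add_dd hk, Nat.add_right_cancel_iff, hfactor]
  exact ⟨fun h => (Submodule.eq_of_le_of_finrank_eq hWV (hW.trans h.symm)).ge,
    fun h => by rw [le_antisymm h hWV, hW]⟩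
end

section
/- Let X be an n-independent set and A ∈ X a point possessing an n-fundamental polynomial p*_A with p*_A(A') ≠ 0 for some point A'. Then the set X' = (X ∖ {A}) ∪ {A'} is n-independent. -/
open MvPolynomial
open scoped Classical

lemma evalPt_smul (c : ℝ) (p : MvPolynomial (Fin 2) ℝ) (A : ℝ × ℝ) :
    evalPt (c • p) A = c * evalPt p A := by
  simp [evalPt, MvPolynomial.smul_eval]

lemma evalPt_sub (p q : MvPolynomial (Fin 2) ℝ) (A : ℝ × ℝ) :
    evalPt (p - q) A = evalPt p A - evalPt q A := by
  simp [evalPt]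

theorem stmt15 (n : ℕ) (X : Finset (ℝ × ℝ)) (hX : Indep n X)
    (A : ℝ × ℝ) (hA : A ∈ X) (A' : ℝ × ℝ)
    (p : MvPolynomial (Fin 2) ℝ) (hp : IsFund n X A p)
    (hA' : evalPt p A' ≠ 0) :
    Indep n (insert A' (X.erase A)) := by
  obtain ⟨hdeg, hpA, hp0⟩ := hp
  have hA'not : A' ∉ X.erase A := by
    intro h
    exact hA' (hp0 A' (Finset.mem_of_mem_erase h) (Finset.ne_of_mem_erase h))
  intro B hB
  rcases Finset.mem_insert.mp hB with rfl | hBe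
  · refine ⟨(evalPt p B)⁻¹ • p, ?_, ?_, ?_⟩
    · exact le_trans (MvPolynomial.totalDegree_smul_le _ _) hdeg
    · rw [evalPt_smul, inv_mul_cancel₀ hA']
    · intro C hC hCB
      rcases Finset.mem_insert.mp hC with rfl | hCe
      · exact absurd rfl hCB
      · rw [evalPt_smul, hp0 C (Finset.mem_of_mem_erase hCe) (Finset.ne_of_mem_erase hCe),
          mul_zero]
  · obtain ⟨q, hqdeg, hqB, hq0⟩ := hX B (Finset.mem_of_mem_erase hBe)
    refine ⟨q - (evalPt q A' / evalPt p A') • p, ?_, ?_, ?_⟩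
    · exact le_trans (MvPolynomial.totalDegree_sub _ _)
        (max_le hqdeg (le_trans (MvPolynomial.totalDegree_smul_le _ _) hdeg))
    · rw [evalPt_sub, evalPt_smul, hqB,
        hp0 B (Finset.mem_of_mem_erase hBe) (Finset.ne_of_mem_erase hBe), mul_zero, sub_zero]
    · intro C hC hCB
      rw [evalPt_sub, evalPt_smul]
      rcases Finset.mem_insert.mp hC with rfl | hCe
      · rw [div_mul_cancel₀ _ hA', sub_self]
      · have hCA' : C ≠ A' := fun h => hA'not (h ▸ hCe)
        rw [hq0 C (Finset.mem_of_mem_erase hCe) hCB,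
          hp0 C (Finset.mem_of_mem_erase hCe) (Finset.ne_of_mem_erase hCe), mul_zero, sub_zero]
end
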